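/- Let G be a connected bipartite graph with parts U and V, and let c : E(G) → ℝ_{>0} be a positive edge weighting such that for every circuit (u_{i_1}, v_{j_1}, ..., u_{i_r}, v_{j_r}, u_{i_1}) of G, the alternating product ∏_{t=1}^r c(u_{i_t} v_{j_t}) / c(u_{i_{t+1}} v_{j_t}) = 1. Then there exist positive functions a : U → ℝ_{>0} and b : V → ℝ_{>0} such that c(uv) = a(u) b(v) for every edge uv ∈ E(G). -/

import Mathlib

/-!
Take logarithms: counting `log c e` positively on the dart of `e` from `U` to `V` and negatively
on the reverse dart gives an antisymmetric function on darts whose sum along a cycle of the graph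
is the logarithm of the alternating product of the circuit condition, hence zero. Shortcutting
repeated vertices (`Walk.bypass`) reduces every closed walk to cycles and back-and-forth steps,
so every closed walk sums to zero. On a connected graph the dart sum along any walk from a base
vertex is then a potential `F` with `log c(uv) = F v - F u`, and `a = exp (-F)`, `b = exp F`.
-/

set_option autoImplicit false

/-- The simple graph on `U ⊕ V` determined by the edges `E` of a bipartite graph with
endpoint maps `epU`, `epV`. -/
def edgeGraph {U V E : Type*} (epU : E → U) (epV : E → V) : SimpleGraph (U ⊕ V) where
  Adj x y := ∃ e : E, (x = Sum.inl (epU e) ∧ y = Sum.inr (epV e)) ∨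
    (x = Sum.inr (epV e) ∧ y = Sum.inl (epU e))
  symm := by
    constructor
    rintro x y ⟨e, (⟨hx, hy⟩ | ⟨hx, hy⟩)⟩
    · exact ⟨e, Or.inr ⟨hy, hx⟩⟩
    · exact ⟨e, Or.inl ⟨hy, hx⟩⟩
  loopless := by
    constructor
    rintro x ⟨e, (⟨hx, hy⟩ | ⟨hx, hy⟩)⟩ <;> simp_all

theorem Finset.sum_range_two_mul {M : Type*} [AddCommMonoid M] (f : ℕ → M) (n : ℕ) :
    ∑ i ∈ range (2 * n), f i = ∑ i ∈ range n, (f (2 * i) + f (2 * i + 1)) := by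
  induction n with
  | zero => simp
  | succ n ih =>
    rw [mul_add, mul_one, sum_range_succ, sum_range_succ, sum_range_succ, ih, add_assoc]

theorem exists_fun_of_forall_lt_exists {α : Type*} [Nonempty α] {P : ℕ → α → Prop}
    {n : ℕ} (h : ∀ t < n, ∃ a, P t a) : ∃ f : ℕ → α, ∀ t < n, P t (f t) := by
  classical
  exact ⟨fun t => if ht : t < n then (h t ht).choose else Classical.arbitrary α,
    fun t ht => by simpa [ht] using (h t ht).choose_spec⟩

namespace SimpleGraph

variable {V M : Type*} [AddCommGroup M] {G : SimpleGraph V} (φ : V → V → M)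

namespace Walk

def dartSum {u v : V} (p : G.Walk u v) : M :=
  (p.darts.map fun d => φ d.fst d.snd).sum

@[simp]
theorem dartSum_nil {u : V} : (nil : G.Walk u u).dartSum φ = 0 := rfl

@[simp]
theorem dartSum_cons {u v w : V} (h : G.Adj u v) (p : G.Walk v w) :
    (cons h p).dartSum φ = φ u v + p.dartSum φ := by
  simp [dartSum]

@[simp]
theorem dartSum_append {u v w : V} (p : G.Walk u v) (q : G.Walk v w) :
    (p.append q).dartSum φ = p.dartSum φ + q.dartSum φ := by
  simp [dartSum]

theorem dartSum_reverse (hφ : ∀ x y, φ y x = -φ x y) {u v : V} (p : G.Walk u v) :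
    p.reverse.dartSum φ = -p.dartSum φ := by
  induction p with
  | nil => simp
  | cons h p ih =>
    rw [reverse_cons, dartSum_append, dartSum_cons, dartSum_nil, ih, hφ, dartSum_cons]
    abel

theorem dartSum_rotate [DecidableEq V] {u v : V} (c : G.Walk v v) (h : u ∈ c.support) :
    (c.rotate u h).dartSum φ = c.dartSum φ :=
  ((c.rotate_darts u h).perm.map _).sum_eq

theorem dartSum_eq_sum_range {u v : V} (p : G.Walk u v) :
    p.dartSum φ = ∑ i ∈ Finset.range p.length, φ (p.getVert i) (p.getVert (i + 1)) := by
  induction p with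
  | nil => simp
  | cons h p ih =>
    rw [dartSum_cons, ih, length_cons, Finset.sum_range_succ', add_comm]
    simp only [getVert_cons_succ, getVert_zero]

variable {φ}

theorem dartSum_cons_eq_zero_of_isPath (hφ : ∀ x y, φ y x = -φ x y)
    (hcyc : ∀ x (c : G.Walk x x), c.IsCycle → c.dartSum φ = 0)
    {u v : V} (h : G.Adj u v) {q : G.Walk v u} (hq : q.IsPath) :
    (cons h q).dartSum φ = 0 := by
  by_cases hmem : s(v, u) ∈ q.edges
  · rw [hq.eq_adj_toWalk_of_mem_edges hmem, Adj.toWalk, dartSum_cons, dartSum_cons, dartSum_nil,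
      add_zero, hφ, neg_add_cancel]
  · exact hcyc u _ ((cons_isCycle_iff q h).mpr ⟨hq, by rwa [Sym2.eq_swap]⟩)

theorem dartSum_bypass [DecidableEq V] (hφ : ∀ x y, φ y x = -φ x y)
    (hcyc : ∀ x (c : G.Walk x x), c.IsCycle → c.dartSum φ = 0)
    {u v : V} (p : G.Walk u v) : p.bypass.dartSum φ = p.dartSum φ := by
  induction p with
  | nil => rfl
  | @cons u w v h p ih =>
    rw [bypass, dartSum_cons, ← ih]
    split_ifs with hu
    · have hloop := dartSum_cons_eq_zero_of_isPath hφ hcyc h (p.bypass_isPath.takeUntil hu)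
      conv_rhs => rw [← p.bypass.take_spec hu]
      rw [dartSum_append, ← add_assoc, ← dartSum_cons φ h, hloop, zero_add]
    · exact dartSum_cons φ h _

theorem dartSum_eq_zero_of_forall_isCycle (hφ : ∀ x y, φ y x = -φ x y)
    (hcyc : ∀ x (c : G.Walk x x), c.IsCycle → c.dartSum φ = 0)
    {u : V} (p : G.Walk u u) : p.dartSum φ = 0 := by
  classical
  rw [← dartSum_bypass hφ hcyc, eq_nil_iff_nil.mpr (isPath_iff_nil.mp p.bypass_isPath),
    dartSum_nil]

end Walk

variable {φ}

theorem Connected.exists_potential_of_forall_isCycle (hG : G.Connected)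
    (hφ : ∀ x y, φ y x = -φ x y)
    (hcyc : ∀ x (c : G.Walk x x), c.IsCycle → c.dartSum φ = 0) :
    ∃ F : V → M, ∀ x y, G.Adj x y → φ x y = F y - F x := by
  obtain ⟨x₀⟩ := hG.nonempty
  let walkFrom (x : V) : G.Walk x₀ x := (hG.preconnected x₀ x).some
  refine ⟨fun x => (walkFrom x).dartSum φ, fun x y h => ?_⟩
  have hclosed := Walk.dartSum_eq_zero_of_forall_isCycle hφ hcyc
    (((walkFrom x).concat h).append (walkFrom y).reverse)
  rw [Walk.dartSum_append, Walk.concat, Walk.dartSum_append, Walk.dartSum_reverse φ hφ,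
    Walk.dartSum_cons, Walk.dartSum_nil, add_zero] at hclosed
  rw [eq_sub_iff_add_eq, ← sub_eq_zero, ← hclosed]
  abel

end SimpleGraph

def CircuitCondition {U V E : Type*} (epU : E → U) (epV : E → V) (c : E → ℝ) : Prop :=
  ∀ (r : ℕ), 2 ≤ r → ∀ (u : ℕ → U) (v : ℕ → V) (a b : ℕ → E),
    (∀ t < r, epU (a t) = u t ∧ epV (a t) = v t) →
    (∀ t < r, epU (b t) = u ((t + 1) % r) ∧ epV (b t) = v t) →
    (∀ s < r, ∀ t < r, u s = u t → s = t) →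
    (∀ s < r, ∀ t < r, v s = v t → s = t) →
    ∏ t ∈ Finset.range r, c (a t) = ∏ t ∈ Finset.range r, c (b t)

namespace edgeGraph

open SimpleGraph Walk

variable {U V E : Type*} {epU : E → U} {epV : E → V}

def sideColoring : (edgeGraph epU epV).Coloring Bool :=
  Coloring.mk Sum.isLeft <| by rintro _ _ ⟨e, ⟨rfl, rfl⟩ | ⟨rfl, rfl⟩⟩ <;> simp

theorem isLeft_getVert_iff {u : U} {y : U ⊕ V} (p : (edgeGraph epU epV).Walk (.inl u) y)
    {t : ℕ} (ht : t ≤ p.length) : (p.getVert t).isLeft ↔ Even t := by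
  have h := sideColoring.even_length_iff_congr (p.take t)
  rw [take_length, Nat.min_eq_left ht] at h
  change Even t ↔ (true ↔ (p.getVert t).isLeft) at h
  simp [h]

theorem getVert_eq_of_even {u : U} {y : U ⊕ V} (p : (edgeGraph epU epV).Walk (.inl u) y) {t : ℕ}
    (ht : t < p.length) (heven : Even t) :
    ∃ e, p.getVert t = .inl (epU e) ∧ p.getVert (t + 1) = .inr (epV e) := by
  obtain ⟨e, he | ⟨hl, -⟩⟩ := p.adj_getVert_succ ht
  · exact ⟨e, he⟩
  · have := (isLeft_getVert_iff p ht.le).mpr heven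
    simp [hl] at this

theorem getVert_eq_of_odd {u : U} {y : U ⊕ V} (p : (edgeGraph epU epV).Walk (.inl u) y) {t : ℕ}
    (ht : t < p.length) (hodd : Odd t) :
    ∃ e, p.getVert t = .inr (epV e) ∧ p.getVert (t + 1) = .inl (epU e) := by
  obtain ⟨e, ⟨hl, -⟩ | he⟩ := p.adj_getVert_succ ht
  · have := (isLeft_getVert_iff p ht.le).not.mpr (Nat.not_even_iff_odd.mpr hodd)
    simp [hl] at this
  · exact ⟨e, he⟩

variable (epU epV) (c : E → ℝ)

open Classical in
noncomputable def logWeight (u : U) (v : V) : ℝ :=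
  if h : ∃ e, epU e = u ∧ epV e = v then Real.log (c h.choose) else 0

theorem logWeight_eq (hsimple : ∀ e1 e2 : E, epU e1 = epU e2 → epV e1 = epV e2 → e1 = e2)
    (e : E) : logWeight epU epV c (epU e) (epV e) = Real.log (c e) := by
  have h : ∃ e', epU e' = epU e ∧ epV e' = epV e := ⟨e, rfl, rfl⟩
  rw [logWeight, dif_pos h, hsimple _ e h.choose_spec.1 h.choose_spec.2]

noncomputable def orientedLogWeight : U ⊕ V → U ⊕ V → ℝ
  | .inl u, .inr v => logWeight epU epV c u v
  | .inr v, .inl u => -logWeight epU epV c u v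
  | _, _ => 0

theorem orientedLogWeight_swap (x y : U ⊕ V) :
    orientedLogWeight epU epV c y x = -orientedLogWeight epU epV c x y := by
  rcases x with u | v <;> rcases y with u' | v' <;> simp [orientedLogWeight]

variable {epU epV c}

theorem exists_edges_getVert {u : U} {y : U ⊕ V} (p : (edgeGraph epU epV).Walk (.inl u) y)
    {r : ℕ} (hr : p.length = 2 * r) (hr0 : 0 < r) :
    ∃ a b : ℕ → E, ∀ t < r,
      (p.getVert (2 * t) = .inl (epU (a t)) ∧ p.getVert (2 * t + 1) = .inr (epV (a t))) ∧
      (p.getVert (2 * t + 1) = .inr (epV (b t)) ∧ p.getVert (2 * t + 2) = .inl (epU (b t))) := by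
  have : Nonempty E := ⟨(getVert_eq_of_even p (t := 0) (by omega) ⟨0, rfl⟩).choose⟩
  obtain ⟨a, ha⟩ := exists_fun_of_forall_lt_exists (n := r) fun t ht =>
    getVert_eq_of_even p (t := 2 * t) (by omega) (even_two_mul t)
  obtain ⟨b, hb⟩ := exists_fun_of_forall_lt_exists (n := r) fun t ht =>
    getVert_eq_of_odd p (t := 2 * t + 1) (by omega) (odd_two_mul_add_one t)
  exact ⟨a, b, fun t ht => ⟨ha t ht, hb t ht⟩⟩

theorem dartSum_orientedLogWeight_eq
    (hsimple : ∀ e1 e2 : E, epU e1 = epU e2 → epV e1 = epV e2 → e1 = e2)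
    {u : U} {y : U ⊕ V} (p : (edgeGraph epU epV).Walk (.inl u) y)
    {r : ℕ} (hr : p.length = 2 * r) {a b : ℕ → E} (hab : ∀ t < r,
      (p.getVert (2 * t) = .inl (epU (a t)) ∧ p.getVert (2 * t + 1) = .inr (epV (a t))) ∧
      (p.getVert (2 * t + 1) = .inr (epV (b t)) ∧ p.getVert (2 * t + 2) = .inl (epU (b t)))) :
    p.dartSum (orientedLogWeight epU epV c) =
      ∑ t ∈ Finset.range r, (Real.log (c (a t)) - Real.log (c (b t))) := by
  rw [dartSum_eq_sum_range, hr, Finset.sum_range_two_mul]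
  refine Finset.sum_congr rfl fun t ht => ?_
  obtain ⟨⟨ha₀, ha₁⟩, hb₁, hb₂⟩ := hab t (Finset.mem_range.mp ht)
  rw [ha₀, show 2 * t + 1 + 1 = 2 * t + 2 from rfl, hb₂]
  nth_rw 1 [ha₁]
  rw [hb₁]
  simp only [orientedLogWeight, logWeight_eq epU epV c hsimple]
  ring

theorem dartSum_orientedLogWeight_of_isCycle_inl
    (hsimple : ∀ e1 e2 : E, epU e1 = epU e2 → epV e1 = epV e2 → e1 = e2)
    (hc : ∀ e, 0 < c e)
    (hcirc : CircuitCondition epU epV c)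
    {u₀ : U} {p : (edgeGraph epU epV).Walk (.inl u₀) (.inl u₀)} (hp : p.IsCycle) :
    p.dartSum (orientedLogWeight epU epV c) = 0 := by
  obtain ⟨r, hr⟩ : ∃ r, p.length = 2 * r :=
    ((isLeft_getVert_iff p le_rfl).mp (by rw [getVert_length]; rfl)).exists_two_nsmul _
  have hr2 : 2 ≤ r := by have := hp.three_le_length; omega
  obtain ⟨a, b, hab⟩ := exists_edges_getVert p hr (by omega)
  have hinj : ∀ s t, s < p.length → t < p.length → p.getVert s = p.getVert t → s = t :=
    fun s t hs ht h => hp.getVert_injOn' (by simp; omega) (by simp; omega) h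
  have hwrap : ∀ t < r, p.getVert (2 * ((t + 1) % r)) = p.getVert (2 * t + 2) := by
    intro t ht
    rcases Nat.lt_or_ge (t + 1) r with h | h
    · rw [Nat.mod_eq_of_lt h, mul_add, mul_one]
    · rw [show t + 1 = r by omega, Nat.mod_self, mul_zero, getVert_zero,
        show 2 * t + 2 = p.length by omega, getVert_length]
  have hprod := hcirc r hr2 (fun t => epU (a t)) (fun t => epV (a t)) a b
    (fun t _ => ⟨rfl, rfl⟩)
    (fun t ht => ⟨Sum.inl_injective <| (hab t ht).2.2.symm.trans <|
        (hwrap t ht).symm.trans (hab _ (Nat.mod_lt _ (by omega))).1.1,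
      Sum.inr_injective <| (hab t ht).2.1.symm.trans (hab t ht).1.2⟩)
    (fun s hs t ht h => by
      have := hinj (2 * s) (2 * t) (by omega) (by omega)
        (by rw [(hab s hs).1.1, (hab t ht).1.1, h])
      omega)
    (fun s hs t ht h => by
      have := hinj (2 * s + 1) (2 * t + 1) (by omega) (by omega)
        (by rw [(hab s hs).1.2, (hab t ht).1.2, h])
      omega)
  rw [dartSum_orientedLogWeight_eq hsimple p hr hab, Finset.sum_sub_distrib,
    ← Real.log_prod (fun t _ => (hc (a t)).ne'), ← Real.log_prod (fun t _ => (hc (b t)).ne'),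
    hprod, sub_self]

theorem dartSum_orientedLogWeight_of_isCycle
    (hsimple : ∀ e1 e2 : E, epU e1 = epU e2 → epV e1 = epV e2 → e1 = e2)
    (hc : ∀ e, 0 < c e) (hcirc : CircuitCondition epU epV c)
    {x : U ⊕ V} {p : (edgeGraph epU epV).Walk x x} (hp : p.IsCycle) :
    p.dartSum (orientedLogWeight epU epV c) = 0 := by
  classical
  rcases x with u₀ | v₀
  · exact dartSum_orientedLogWeight_of_isCycle_inl hsimple hc hcirc hp
  cases p with
  | nil => exact absurd hp not_isCycle_nil
  | @cons _ y _ h q =>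
    obtain ⟨u, rfl⟩ : ∃ u, y = .inl u := by
      obtain ⟨e, ⟨h₁, -⟩ | ⟨-, rfl⟩⟩ := h
      · cases h₁
      · exact ⟨_, rfl⟩
    have hmem : Sum.inl u ∈ (cons h q).support := by simp
    rw [← dartSum_rotate _ _ hmem]
    exact dartSum_orientedLogWeight_of_isCycle_inl hsimple hc hcirc (hp.rotate hmem)

end edgeGraph

open edgeGraph

theorem edge_weights_factor_of_circuit_condition_general
    {U V E : Type*}
    (epU : E → U) (epV : E → V)
    (hsimple : ∀ e1 e2 : E, epU e1 = epU e2 → epV e1 = epV e2 → e1 = e2)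
    (hconn : (edgeGraph epU epV).Connected)
    (c : E → ℝ) (hc : ∀ e, 0 < c e)
    (hcirc : ∀ (r : ℕ), 2 ≤ r → ∀ (u : ℕ → U) (v : ℕ → V) (a b : ℕ → E),
      (∀ t < r, epU (a t) = u t ∧ epV (a t) = v t) →
      (∀ t < r, epU (b t) = u ((t + 1) % r) ∧ epV (b t) = v t) →
      (∀ s < r, ∀ t < r, u s = u t → s = t) →
      (∀ s < r, ∀ t < r, v s = v t → s = t) →
      ∏ t ∈ Finset.range r, c (a t) = ∏ t ∈ Finset.range r, c (b t)) :
    ∃ (a : U → ℝ) (b : V → ℝ), (∀ u, 0 < a u) ∧ (∀ v, 0 < b v) ∧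
      ∀ e, c e = a (epU e) * b (epV e) := by
  obtain ⟨F, hF⟩ := hconn.exists_potential_of_forall_isCycle (orientedLogWeight_swap epU epV c)
    fun _ _ hp => dartSum_orientedLogWeight_of_isCycle hsimple hc hcirc hp
  refine ⟨fun u => Real.exp (-F (.inl u)), fun v => Real.exp (F (.inr v)),
    fun _ => Real.exp_pos _, fun _ => Real.exp_pos _, fun e => ?_⟩
  have hlog : Real.log (c e) = F (.inr (epV e)) - F (.inl (epU e)) := by
    rw [← logWeight_eq epU epV c hsimple]
    exact hF _ _ ⟨e, .inl ⟨rfl, rfl⟩⟩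
  rw [← Real.exp_add, neg_add_eq_sub, ← hlog, Real.exp_log (hc e)]

/-- if a positive edge weighting `c` of a finite connected (simple) bipartite
graph has alternating product `1` around every circuit, then it factors as
`c(uv) = a(u) · b(v)` for positive vertex weights `a`, `b`. -/
theorem edge_weights_factor_of_circuit_condition
    {U V E : Type*} [Fintype U] [Fintype V] [Fintype E]
    (epU : E → U) (epV : E → V)
    (hsimple : ∀ e1 e2 : E, epU e1 = epU e2 → epV e1 = epV e2 → e1 = e2)
    (hconn : (edgeGraph epU epV).Connected)
    (c : E → ℝ) (hc : ∀ e, 0 < c e)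
    (hcirc : ∀ (r : ℕ), 2 ≤ r → ∀ (u : ℕ → U) (v : ℕ → V) (a b : ℕ → E),
      (∀ t < r, epU (a t) = u t ∧ epV (a t) = v t) →
      (∀ t < r, epU (b t) = u ((t + 1) % r) ∧ epV (b t) = v t) →
      (∀ s < r, ∀ t < r, u s = u t → s = t) →
      (∀ s < r, ∀ t < r, v s = v t → s = t) →
      ∏ t ∈ Finset.range r, c (a t) = ∏ t ∈ Finset.range r, c (b t)) :
    ∃ (a : U → ℝ) (b : V → ℝ), (∀ u, 0 < a u) ∧ (∀ v, 0 < b v) ∧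
      ∀ e, c e = a (epU e) * b (epV e) :=
  edge_weights_factor_of_circuit_condition_general epU epV hsimple hconn c hc hcirc
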